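/- For any nonzero elements q, r of the ring Z[1/√2] with sde(q) > sde(r), we have sde((q+r)/√2) = sde(q)+1 and sde((q−r)/√2) = sde(q)+1. -/

import Mathlib

/-- The ring `ℤ[1/√2]`: real numbers of the form `(a + b√2)/√2^k`. -/
def Zroot2 (v : ℝ) : Prop :=
  ∃ (a b : ℤ) (k : ℕ), v = (a + b * Real.sqrt 2) / (Real.sqrt 2) ^ k

/-- The smallest denominator exponent of `v ∈ ℤ[1/√2]`. -/
noncomputable def sde (v : ℝ) : ℕ :=
  sInf {k : ℕ | ∃ a b : ℤ, v = (a + b * Real.sqrt 2) / (Real.sqrt 2) ^ k}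

/-!
If `sde q = k + 1`, then `q = (a + b√2)/√2^(k+1)` with `a` odd, since an even `a` would let one
cancel a factor `√2`; and conversely, by irrationality of `√2`, an odd leading coefficient forces
the denominator exponent to be exactly `k + 1`. Since `sde r ≤ k`, we can write
`r = (2d + c√2)/√2^(k+1)`, so `(q ± r)/√2 = ((a ± 2d) + (b ± c)√2)/√2^(k+2)` has odd leading
coefficient `a ± 2d`.
-/

open Real

def Zroot2At (v : ℝ) (k : ℕ) : Prop :=
  ∃ a b : ℤ, v = (a + b * √2) / √2 ^ k

theorem int_add_int_mul_sqrt_two_inj {a b c d : ℤ} (h : a + b * √2 = c + d * √2) :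
    a = c ∧ b = d := by
  have hbd : b = d := by
    by_contra hne
    have hirr : Irrational ((b - d : ℤ) * √2) :=
      irrational_sqrt_two.intCast_mul (sub_ne_zero.mpr hne)
    exact hirr.ne_int (c - a) (by push_cast; linarith)
  subst hbd
  exact ⟨by exact_mod_cast (by linarith : (a : ℝ) = c), rfl⟩

theorem int_add_int_mul_sqrt_two_div_pow_succ (a b : ℤ) (k : ℕ) :
    ((2 * b : ℤ) + a * √2) / √2 ^ (k + 1) = (a + b * √2) / √2 ^ k := by
  have hnum : ((2 * b : ℤ) : ℝ) + a * √2 = (a + b * √2) * √2 := by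
    push_cast
    linear_combination (-(b : ℝ)) * mul_self_sqrt (zero_le_two : (0 : ℝ) ≤ 2)
  rw [hnum, pow_succ, mul_div_mul_right _ _ (by positivity)]

namespace Zroot2At

variable {v : ℝ} {k : ℕ}

theorem succ (h : Zroot2At v k) : Zroot2At v (k + 1) := by
  obtain ⟨a, b, rfl⟩ := h
  exact ⟨2 * b, a, (int_add_int_mul_sqrt_two_div_pow_succ a b k).symm⟩

theorem mono {m : ℕ} (h : Zroot2At v k) (hkm : k ≤ m) : Zroot2At v m := by
  induction m, hkm using Nat.le_induction with
  | base => exact h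
  | succ m _ ih => exact ih.succ

theorem neg (h : Zroot2At v k) : Zroot2At (-v) k := by
  obtain ⟨a, b, rfl⟩ := h
  exact ⟨-a, -b, by push_cast; ring⟩

theorem sde_le (h : Zroot2At v k) : sde v ≤ k :=
  Nat.sInf_le h

theorem zroot2At_sde (h : Zroot2At v k) : Zroot2At v (sde v) :=
  Nat.sInf_mem (s := {k | Zroot2At v k}) ⟨k, h⟩

end Zroot2At

theorem Zroot2.zroot2At_sde {v : ℝ} (h : Zroot2 v) : Zroot2At v (sde v) := by
  obtain ⟨a, b, k, hv⟩ := h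
  exact Zroot2At.zroot2At_sde (k := k) ⟨a, b, hv⟩

theorem odd_of_sde_eq_succ {v : ℝ} {a b : ℤ} {k : ℕ}
    (hv : v = (a + b * √2) / √2 ^ (k + 1)) (hsde : sde v = k + 1) : Odd a := by
  rw [← Int.not_even_iff_odd]
  rintro ⟨m, rfl⟩
  have : sde v ≤ k :=
    Zroot2At.sde_le ⟨b, m, by rw [hv, ← two_mul, int_add_int_mul_sqrt_two_div_pow_succ]⟩
  omega

theorem sde_eq_succ_of_odd {v : ℝ} {a b : ℤ} {k : ℕ} (ha : Odd a)
    (hv : v = (a + b * √2) / √2 ^ (k + 1)) : sde v = k + 1 := by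
  have hv' : Zroot2At v (k + 1) := ⟨a, b, hv⟩
  refine le_antisymm hv'.sde_le (Nat.succ_le_of_lt ?_)
  by_contra! hle
  obtain ⟨c, d, hcd⟩ := hv'.zroot2At_sde.mono hle
  rw [← int_add_int_mul_sqrt_two_div_pow_succ, hv,
    div_left_inj' (by positivity)] at hcd
  obtain ⟨rfl, -⟩ := int_add_int_mul_sqrt_two_inj hcd
  exact Int.not_even_iff_odd.mpr ha (even_two_mul d)

theorem sde_add_div_sqrt_two {q r : ℝ} {k : ℕ} (hq : Zroot2At q (k + 1)) (hsde : sde q = k + 1)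
    (hr : Zroot2At r k) : sde ((q + r) / √2) = k + 2 := by
  obtain ⟨a, b, hqab⟩ := hq
  obtain ⟨c, d, hrcd⟩ := hr
  rw [← int_add_int_mul_sqrt_two_div_pow_succ] at hrcd
  obtain ⟨m, rfl⟩ := odd_of_sde_eq_succ hqab hsde
  refine sde_eq_succ_of_odd (a := 2 * (m + d) + 1) (b := b + c) (odd_two_mul_add_one _) ?_
  rw [hqab, hrcd, ← add_div, div_div, ← pow_succ]
  push_cast
  ring

theorem sde_add_sub_div_sqrt_two_general (q r : ℝ) (hq : Zroot2 q) (hr : Zroot2 r)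
    (h : sde r < sde q) :
    sde ((q + r) / Real.sqrt 2) = sde q + 1 ∧
    sde ((q - r) / Real.sqrt 2) = sde q + 1 := by
  obtain ⟨k, hk⟩ : ∃ k, sde q = k + 1 := Nat.exists_eq_add_one_of_ne_zero (by omega)
  have hqk : Zroot2At q (k + 1) := hk ▸ hq.zroot2At_sde
  have hrk : Zroot2At r k := hr.zroot2At_sde.mono (by omega)
  rw [hk, sub_eq_add_neg]
  exact ⟨sde_add_div_sqrt_two hqk hk hrk, sde_add_div_sqrt_two hqk hk hrk.neg⟩

theorem sde_add_sub_div_sqrt_two (q r : ℝ) (hq : Zroot2 q) (hr : Zroot2 r)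
    (hq0 : q ≠ 0) (hr0 : r ≠ 0) (h : sde r < sde q) :
    sde ((q + r) / Real.sqrt 2) = sde q + 1 ∧
    sde ((q - r) / Real.sqrt 2) = sde q + 1 :=
  sde_add_sub_div_sqrt_two_general q r hq hr h
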